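/- Let c₁ > 0, q > 1, b₀ ≥ 0, and let g : [0,∞) → [0,∞) be continuous and nondecreasing with g(v) > 0 for v > 0, satisfying g(w) ≤ c₁·(w/v)^(q−1)·g(v) for all w ≥ v > 0 with v ≥ b₀. Define 𝒢(w) := ∫₀^w g(v) dv and ψ(w) := 𝒢(w)/w for w > 0. Then g(w) ≤ (c₁·q/(1 − 2^(−q)))·ψ(w) for all w ≥ 2(1 + b₀), and consequently ψ′(w) ≤ (c₁·q/(1 − 2^(−q)))·ψ(w)/w for all w ≥ 2(1 + b₀). -/

import Mathlib

/-!
On `[w/2, w]` the growth condition, read backwards, gives `g v ≥ (g w / c₁) (v/w)^(q-1)`;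
integrating this over `[w/2, w]` yields `w ψ(w) = 𝒢(w) ≥ (g w / c₁) · w (1 - 2^(-q)) / q`, which is the
first bound. Since `ψ' = (g - ψ)/w` and `ψ ≥ 0`, the second follows from the first.
-/

open Set

lemma integral_div_rpow_half (w : ℝ) {q : ℝ} (hw : 0 < w) (hq : 0 < q) :
    ∫ v in w / 2..w, (v / w) ^ (q - 1) = w * (1 - 2 ^ (-q)) / q := by
  rw [intervalIntegral.integral_comp_div (fun t => t ^ (q - 1)) hw.ne',
    integral_rpow (Or.inl (by linarith)), div_div_cancel_left' hw.ne', div_self hw.ne',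
    sub_add_cancel, Real.one_rpow, Real.inv_rpow zero_le_two, ← Real.rpow_neg zero_le_two,
    smul_eq_mul, mul_div_assoc]

lemma div_mul_rpow_le_of_le_mul_rpow {a b c v w p : ℝ} (hc : 0 < c) (hv : 0 < v) (hw : 0 < w)
    (h : a ≤ c * (w / v) ^ p * b) : a / c * (v / w) ^ p ≤ b := by
  have hvw : 0 < (v / w) ^ p := by positivity
  rw [← inv_div, Real.inv_rpow (by positivity)] at h
  rw [div_mul_eq_mul_div, div_le_iff₀ hc, ← le_div_iff₀ hvw]
  calc a ≤ c * ((v / w) ^ p)⁻¹ * b := h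
    _ = b * c / (v / w) ^ p := by field_simp

lemma mul_div_le_integral_half_of_growth {g : ℝ → ℝ} {c q w : ℝ} (hc : 0 < c) (hq : 0 < q)
    (hw : 0 < w) (hg : ContinuousOn g (Icc (w / 2) w))
    (hgrowth : ∀ v ∈ Icc (w / 2) w, g w ≤ c * (w / v) ^ (q - 1) * g v) :
    g w / c * (w * (1 - 2 ^ (-q)) / q) ≤ ∫ v in w / 2..w, g v := by
  have hle : w / 2 ≤ w := by linarith
  rw [← integral_div_rpow_half w hw hq, ← intervalIntegral.integral_const_mul]
  have hv_pos : ∀ v ∈ Icc (w / 2) w, 0 < v := fun v hv => by linarith [hv.1]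
  have hcont : ContinuousOn (fun v => g w / c * (v / w) ^ (q - 1)) (Icc (w / 2) w) :=
    continuousOn_const.mul ((continuousOn_id.div_const w).rpow_const fun v hv =>
      Or.inl (div_pos (hv_pos v hv) hw).ne')
  exact intervalIntegral.integral_mono_on hle (hcont.intervalIntegrable_of_Icc hle)
    (hg.intervalIntegrable_of_Icc hle) fun v hv =>
      div_mul_rpow_le_of_le_mul_rpow hc (hv_pos v hv) hw (hgrowth v hv)

lemma le_mul_integral_div_of_growth {g : ℝ → ℝ} {c q w : ℝ} (hc : 0 < c) (hq : 0 < q)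
    (hw : 0 < w) (hg : ContinuousOn g (Icc 0 w)) (hg_nonneg : ∀ v ∈ Icc 0 w, 0 ≤ g v)
    (hgrowth : ∀ v ∈ Icc (w / 2) w, g w ≤ c * (w / v) ^ (q - 1) * g v) :
    g w ≤ c * q / (1 - 2 ^ (-q)) * ((∫ v in (0:ℝ)..w, g v) / w) := by
  have hA : 0 < 1 - (2:ℝ) ^ (-q) := by
    linarith [Real.rpow_lt_one_of_one_lt_of_neg one_lt_two (neg_neg_of_pos hq)]
  have hhalf : 0 ≤ w / 2 := by linarith
  have hsub : Icc (w / 2) w ⊆ Icc 0 w := Icc_subset_Icc_left hhalf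
  have htail := mul_div_le_integral_half_of_growth hc hq hw (hg.mono hsub) hgrowth
  have hhead_nonneg : 0 ≤ ∫ v in (0:ℝ)..w / 2, g v :=
    intervalIntegral.integral_nonneg hhalf fun v hv => hg_nonneg v ⟨hv.1, by linarith [hv.2]⟩
  have hsplit : (∫ v in (0:ℝ)..w / 2, g v) + ∫ v in w / 2..w, g v = ∫ v in (0:ℝ)..w, g v :=
    intervalIntegral.integral_add_adjacent_intervals
      ((hg.mono (Icc_subset_Icc_right (by linarith))).intervalIntegrable_of_Icc hhalf)
      ((hg.mono hsub).intervalIntegrable_of_Icc (by linarith))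
  have key : g w / c * (w * (1 - 2 ^ (-q)) / q) ≤ ∫ v in (0:ℝ)..w, g v := by linarith
  calc g w = c * q / (1 - 2 ^ (-q)) * ((g w / c * (w * (1 - 2 ^ (-q)) / q)) / w) := by
        field_simp
    _ ≤ c * q / (1 - 2 ^ (-q)) * ((∫ v in (0:ℝ)..w, g v) / w) := by gcongr

lemma hasDerivAt_integral_div {g : ℝ → ℝ} {w : ℝ} (hg : ContinuousOn g (Ici 0)) (hw : 0 < w) :
    HasDerivAt (fun u => (∫ v in (0:ℝ)..u, g v) / u)
      ((g w - (∫ v in (0:ℝ)..w, g v) / w) / w) w := by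
  have hderiv : HasDerivAt (fun u => ∫ v in (0:ℝ)..u, g v) (g w) w :=
    intervalIntegral.integral_hasDerivAt_right
      ((hg.mono Icc_subset_Ici_self).intervalIntegrable_of_Icc hw.le)
      ((hg.mono Ioi_subset_Ici_self).stronglyMeasurableAtFilter isOpen_Ioi w hw)
      (hg.continuousAt (Ici_mem_nhds hw))
  refine (hderiv.div (hasDerivAt_id' w) hw.ne').congr_deriv ?_
  field_simp

theorem g_le_psi_and_psi_derivative_upper_bound_general
    (c₁ q b₀ : ℝ) (hc₁ : 0 < c₁) (hq : 1 < q) (hb₀ : 0 ≤ b₀)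
    (g : ℝ → ℝ)
    (hg_cont : ContinuousOn g (Set.Ici 0))
    (hg_nonneg : ∀ v, 0 ≤ v → 0 ≤ g v)
    (hg1 : ∀ v w : ℝ, 0 < v → b₀ ≤ v → v ≤ w → g w ≤ c₁ * (w / v) ^ (q - 1) * g v) :
    ∀ w : ℝ, 2 * (1 + b₀) ≤ w →
      g w ≤ (c₁ * q / (1 - 2 ^ (-q))) * ((∫ v in (0:ℝ)..w, g v) / w) ∧
      deriv (fun w : ℝ => (∫ v in (0:ℝ)..w, g v) / w) w ≤
        (c₁ * q / (1 - 2 ^ (-q))) * ((∫ v in (0:ℝ)..w, g v) / w) / w := by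
  intro w hw
  have hw0 : 0 < w := by linarith
  have hbound := le_mul_integral_div_of_growth hc₁ (by linarith) hw0
    (hg_cont.mono Icc_subset_Ici_self) (fun v hv => hg_nonneg v hv.1)
    (fun v hv => hg1 v w (by linarith [hv.1]) (by linarith [hv.1]) hv.2)
  refine ⟨hbound, ?_⟩
  have hψ : 0 ≤ (∫ v in (0:ℝ)..w, g v) / w :=
    div_nonneg (intervalIntegral.integral_nonneg hw0.le fun v hv => hg_nonneg v hv.1) hw0.le
  rw [(hasDerivAt_integral_div hg_cont hw0).deriv]
  calc (g w - (∫ v in (0:ℝ)..w, g v) / w) / w ≤ g w / w := by gcongr; linarith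
    _ ≤ _ := by gcongr

/-- Under the growth condition (g₁), with `𝒢(w) = ∫₀^w g(v) dv` and `ψ(w) = 𝒢(w)/w`,
one has `g(w) ≤ (c₁·q/(1 − 2^(−q)))·ψ(w)` for all `w ≥ 2(1+b₀)`, and consequently
`ψ′(w) ≤ (c₁·q/(1 − 2^(−q)))·ψ(w)/w` for all `w ≥ 2(1+b₀)`. -/
theorem g_le_psi_and_psi_derivative_upper_bound
    (c₁ q b₀ : ℝ) (hc₁ : 0 < c₁) (hq : 1 < q) (hb₀ : 0 ≤ b₀)
    (g : ℝ → ℝ)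
    (hg_cont : ContinuousOn g (Set.Ici 0))
    (hg_nonneg : ∀ v, 0 ≤ v → 0 ≤ g v)
    (hg_mono : MonotoneOn g (Set.Ici 0))
    (hg_pos : ∀ v, 0 < v → 0 < g v)
    (hg1 : ∀ v w : ℝ, 0 < v → b₀ ≤ v → v ≤ w → g w ≤ c₁ * (w / v) ^ (q - 1) * g v) :
    ∀ w : ℝ, 2 * (1 + b₀) ≤ w →
      g w ≤ (c₁ * q / (1 - 2 ^ (-q))) * ((∫ v in (0:ℝ)..w, g v) / w) ∧
      deriv (fun w : ℝ => (∫ v in (0:ℝ)..w, g v) / w) w ≤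
        (c₁ * q / (1 - 2 ^ (-q))) * ((∫ v in (0:ℝ)..w, g v) / w) / w :=
  g_le_psi_and_psi_derivative_upper_bound_general c₁ q b₀ hc₁ hq hb₀ g hg_cont hg_nonneg hg1
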